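/- arXiv:2312.17344 — 3 statements merged into one kernel-verified Lean document; each statement's English description precedes it below -/
import Mathlib

section
/- Let n be a natural number, f : (Fin n → Bool) → (Fin n → Bool), and suppose p is a natural number and ℓ ≥ 1 an integer such that f^[p + r + ℓ] = f^[p + r] for every natural number r. Then for every natural number r, the range of the converged logic f^[p + r] equals the kernel states set of f: Set.range (f^[p+r]) = { x | ∃ m ≥ 1, f^[m] x = x }. In particular, every converged logic in the logic cycle leads to the same kernel states set as the original Boolean network. -/
/-- Kernel states set of converged logic: every converged logic in the logic cycle has
as its range exactly the kernel states set of the original Boolean network. -/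
theorem boolean_network_converged_logic_range_eq_kernel
    (n : ℕ) (f : (Fin n → Bool) → (Fin n → Bool))
    (p ℓ : ℕ) (hℓ : 1 ≤ ℓ)
    (hconv : ∀ r : ℕ, f^[p + r + ℓ] = f^[p + r]) (r : ℕ) :
    Set.range (f^[p + r]) = { x : Fin n → Bool | ∃ m : ℕ, 1 ≤ m ∧ f^[m] x = x } := by
  ext x
  constructor
  · rintro ⟨y, rfl⟩
    refine ⟨ℓ, hℓ, ?_⟩
    have h := congrFun (hconv r) y
    rwa [add_comm (p + r) ℓ, Function.iterate_add_apply] at h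
  · rintro ⟨m, hm, hfix⟩
    have hper : ∀ k : ℕ, f^[k * m] x = x := by
      intro k
      induction k with
      | zero => simp
      | succ k ih =>
        rw [Nat.succ_mul, Function.iterate_add_apply, hfix, ih]
    refine ⟨f^[(p + r) * m - (p + r)] x, ?_⟩
    have hle : p + r ≤ (p + r) * m := Nat.le_mul_of_pos_right _ hm
    rw [← Function.iterate_add_apply]
    rw [Nat.add_sub_cancel' hle]
    exact hper (p + r)
end

section
/- Let n be a natural number, f : (Fin n → Bool) → (Fin n → Bool), and suppose p is a natural number and ℓ ≥ 1 an integer such that f^[p + r + ℓ] = f^[p + r] for every natural number r. Then there exists an integer k with 0 ≤ k ≤ ℓ − 1 such that f^[p + k] x = f x for every kernel state x of f; that is, among the ℓ converged logics in the logic cycle there exists at least one kernel logic, whose action on the kernel states set coincides with that of the original network (hence it has the same steady states and cycles as the original Boolean logic). -/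
/-- Existence of kernel logic: among the `ℓ` converged logics `f^[p+k]`, `0 ≤ k ≤ ℓ-1`,
in the logic cycle, at least one acts on the kernel states set exactly as the original
network `f` does (hence it has the same steady states and cycles as `f`). -/
theorem boolean_network_exists_kernel_logic
    (n : ℕ) (f : (Fin n → Bool) → (Fin n → Bool))
    (p ℓ : ℕ) (hℓ : 1 ≤ ℓ)
    (hconv : ∀ r : ℕ, f^[p + r + ℓ] = f^[p + r]) :
    ∃ k : ℕ, k ≤ ℓ - 1 ∧
      ∀ x : Fin n → Bool, (∃ m : ℕ, 1 ≤ m ∧ f^[m] x = x) → f^[p + k] x = f x := by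
  have key : ∀ c r : ℕ, f^[p + r + c * ℓ] = f^[p + r] := by
    intro c
    induction c with
    | zero => simp
    | succ c ih =>
      intro r
      have h1 : p + r + (c + 1) * ℓ = p + (r + c * ℓ) + ℓ := by ring
      have h2 : p + (r + c * ℓ) = p + r + c * ℓ := by ring
      rw [h1, hconv (r + c * ℓ), h2, ih r]
  set k := (1 + (ℓ - 1) * p) % ℓ with hk
  have hkℓ : k < ℓ := Nat.mod_lt _ (by omega)
  refine ⟨k, by omega, ?_⟩
  rintro x ⟨m, hm, hx⟩
  have hmod : (p + k) % ℓ = 1 % ℓ := by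
    have h3 : p + (1 + (ℓ - 1) * p) = 1 + ℓ * p := by
      cases ℓ with
      | zero => omega
      | succ l => simp only [Nat.add_sub_cancel]; ring
    calc (p + k) % ℓ = (p + (1 + (ℓ - 1) * p)) % ℓ := by
            rw [hk, Nat.add_mod_mod]
      _ = 1 % ℓ := by rw [h3, Nat.add_mul_mod_self_left]
  set N := ℓ * (p + 1) with hN
  have hfix : f^[m * N] x = x := by
    rw [Function.iterate_mul]
    exact Function.iterate_fixed hx N
  have hfx : f^[1 + m * N] x = f x := by
    rw [Function.iterate_add_apply, hfix]; rfl
  have hge : p + k ≤ 1 + m * N := by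
    have h1 : N ≤ m * N := Nat.le_mul_of_pos_left N hm
    have h2 : N = ℓ * p + ℓ := by rw [hN]; ring
    have h3 : p ≤ ℓ * p := Nat.le_mul_of_pos_left p hℓ
    omega
  have hmod2 : (1 + m * N) % ℓ = (p + k) % ℓ := by
    rw [hmod, hN, show m * (ℓ * (p + 1)) = m * (p + 1) * ℓ from by ring,
      Nat.add_mul_mod_self_right]
  have hdvd : ℓ ∣ (1 + m * N) - (p + k) :=
    (Nat.modEq_iff_dvd' hge).mp hmod2.symm
  obtain ⟨c, hc⟩ := hdvd
  have heq : 1 + m * N = p + k + c * ℓ := by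
    have := Nat.mul_comm ℓ c
    omega
  have := key c k
  rw [← hfx, heq, this]
end

section
/- Let g : (Fin 7 → Bool) → (Fin 7 → Bool) be the synchronous Boolean network defined componentwise by g(x)₁ = x₁ ∧ x₂, g(x)₂ = x₃, g(x)₃ = x₄, g(x)₄ = x₅, g(x)₅ = x₆, g(x)₆ = x₇, g(x)₇ = x₂. Then the kernel states set of g has exactly 65 elements; more precisely, g has exactly 3 fixed points, exactly 2 kernel states of minimal period 2 (one cycle of period 2), exactly 6 kernel states of minimal period 3 (two cycles of period 3), and exactly 54 kernel states of minimal period 6 (nine cycles of period 6). -/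
set_option maxRecDepth 4000

private def Gnet : (Fin 7 → Bool) → (Fin 7 → Bool) := fun x i =>
  if i = 0 then x 0 && x 1 else if i = 6 then x 1 else x (i + 1)

private lemma Gnet_shift : ∀ x : Fin 7 → Bool, Gnet^[13] x = Gnet^[7] x := by decide

private lemma Gnet_shift' (n : ℕ) (hn : 7 ≤ n) (x : Fin 7 → Bool) :
    Gnet^[n + 6] x = Gnet^[n] x := by
  obtain ⟨k, rfl⟩ := Nat.exists_eq_add_of_le hn
  have h : 7 + k + 6 = k + 13 := by omega
  rw [h, Function.iterate_add_apply, Gnet_shift, ← Function.iterate_add_apply]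
  congr 1; omega

private lemma Gnet_kernel (x : Fin 7 → Bool) :
    (∃ m : ℕ, 1 ≤ m ∧ Gnet^[m] x = x) ↔ Gnet^[6] x = x := by
  constructor
  · rintro ⟨m, hm1, hm⟩
    have hN : Gnet^[42 * m] x = x := by
      have : Gnet^[m * 42] x = x := Function.IsPeriodicPt.mul_const hm 42
      rwa [Nat.mul_comm] at this
    calc Gnet^[6] x = Gnet^[6] (Gnet^[42 * m] x) := by rw [hN]
      _ = Gnet^[6 + 42 * m] x := by rw [← Function.iterate_add_apply]
      _ = Gnet^[42 * m + 6] x := by congr 1; omega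
      _ = Gnet^[42 * m] x := Gnet_shift' _ (by omega) x
      _ = x := hN
  · intro h; exact ⟨6, by norm_num, h⟩

private lemma Gnet_mp_gen (x : Fin 7 → Bool) (d : ℕ)
    (hd : Function.minimalPeriod Gnet x = d) : Gnet^[d] x = x := by
  have := Function.isPeriodicPt_minimalPeriod Gnet x
  rwa [hd] at this

private lemma Gnet_mp2 (x : Fin 7 → Bool) :
    Function.minimalPeriod Gnet x = 2 ↔ Gnet^[2] x = x ∧ ¬ Gnet^[1] x = x := by
  constructor
  · intro h
    refine ⟨Gnet_mp_gen x 2 h, fun hc => ?_⟩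
    have hdv := Function.IsPeriodicPt.minimalPeriod_dvd
      (hc : Function.IsPeriodicPt Gnet 1 x)
    rw [h] at hdv; omega
  · rintro ⟨h2, h1⟩
    have hdv := Function.IsPeriodicPt.minimalPeriod_dvd
      (h2 : Function.IsPeriodicPt Gnet 2 x)
    have hpos : 0 < Function.minimalPeriod Gnet x :=
      Function.IsPeriodicPt.minimalPeriod_pos (by norm_num) h2
    have hle := Nat.le_of_dvd (by norm_num) hdv
    interval_cases hmp : (Function.minimalPeriod Gnet x)
    · exact absurd (Gnet_mp_gen x 1 hmp) h1
    · rfl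

private lemma Gnet_mp3 (x : Fin 7 → Bool) :
    Function.minimalPeriod Gnet x = 3 ↔ Gnet^[3] x = x ∧ ¬ Gnet^[1] x = x := by
  constructor
  · intro h
    refine ⟨Gnet_mp_gen x 3 h, fun hc => ?_⟩
    have hdv := Function.IsPeriodicPt.minimalPeriod_dvd
      (hc : Function.IsPeriodicPt Gnet 1 x)
    rw [h] at hdv; omega
  · rintro ⟨h3, h1⟩
    have hdv := Function.IsPeriodicPt.minimalPeriod_dvd
      (h3 : Function.IsPeriodicPt Gnet 3 x)
    have hpos : 0 < Function.minimalPeriod Gnet x :=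
      Function.IsPeriodicPt.minimalPeriod_pos (by norm_num) h3
    have hle := Nat.le_of_dvd (by norm_num) hdv
    interval_cases hmp : (Function.minimalPeriod Gnet x)
    · exact absurd (Gnet_mp_gen x 1 hmp) h1
    · norm_num at hdv
    · rfl

private lemma Gnet_mp6 (x : Fin 7 → Bool) :
    Function.minimalPeriod Gnet x = 6 ↔
      Gnet^[6] x = x ∧ ¬ Gnet^[2] x = x ∧ ¬ Gnet^[3] x = x := by
  constructor
  · intro h
    refine ⟨Gnet_mp_gen x 6 h, fun hc => ?_, fun hc => ?_⟩
    · have hdv := Function.IsPeriodicPt.minimalPeriod_dvd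
        (hc : Function.IsPeriodicPt Gnet 2 x)
      rw [h] at hdv; omega
    · have hdv := Function.IsPeriodicPt.minimalPeriod_dvd
        (hc : Function.IsPeriodicPt Gnet 3 x)
      rw [h] at hdv; omega
  · rintro ⟨h6, h2, h3⟩
    have hdv := Function.IsPeriodicPt.minimalPeriod_dvd
      (h6 : Function.IsPeriodicPt Gnet 6 x)
    have hpos : 0 < Function.minimalPeriod Gnet x :=
      Function.IsPeriodicPt.minimalPeriod_pos (by norm_num) h6
    have hle := Nat.le_of_dvd (by norm_num) hdv
    interval_cases hmp : (Function.minimalPeriod Gnet x)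
    · -- d = 1
      have h1 := Gnet_mp_gen x 1 hmp
      exact absurd (show Gnet^[2] x = x by
        rw [show (2:ℕ) = 1 + 1 from rfl, Function.iterate_add_apply, h1, h1]) h2
    · exact absurd (Gnet_mp_gen x 2 hmp) h2
    · exact absurd (Gnet_mp_gen x 3 hmp) h3
    · norm_num at hdv
    · norm_num at hdv
    · rfl

private lemma ncard_setOf_eq_filter {α : Type*} [Fintype α] [DecidableEq α]
    (p : α → Prop) [DecidablePred p] :
    Set.ncard {x | p x} = (Finset.univ.filter p).card := by
  rw [Set.ncard_eq_toFinset_card', Set.toFinset_setOf]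

/-- The kernel states set of the seven-node long feedback network has exactly 65
elements: 3 fixed points, 2 states of minimal period 2 (one cycle of period 2),
6 states of minimal period 3 (two cycles of period 3), and 54 states of minimal
period 6 (nine cycles of period 6). -/
theorem long_feedback_network_kernel_count
    (g : (Fin 7 → Bool) → (Fin 7 → Bool))
    (hg : ∀ (x : Fin 7 → Bool) (i : Fin 7),
      g x i = if i = 0 then x 0 && x 1 else if i = 6 then x 1 else x (i + 1)) :
    Set.ncard { x : Fin 7 → Bool | ∃ m : ℕ, 1 ≤ m ∧ g^[m] x = x } = 65 ∧
    Set.ncard { x : Fin 7 → Bool | g x = x } = 3 ∧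
    Set.ncard { x : Fin 7 → Bool | Function.minimalPeriod g x = 2 } = 2 ∧
    Set.ncard { x : Fin 7 → Bool | Function.minimalPeriod g x = 3 } = 6 ∧
    Set.ncard { x : Fin 7 → Bool | Function.minimalPeriod g x = 6 } = 54 := by
  have hgG : g = Gnet := funext fun x => funext fun i => hg x i
  subst hgG
  refine ⟨?_, ?_, ?_, ?_, ?_⟩
  · have : { x : Fin 7 → Bool | ∃ m : ℕ, 1 ≤ m ∧ Gnet^[m] x = x }
        = { x : Fin 7 → Bool | Gnet^[6] x = x } := by
      ext x; exact Gnet_kernel x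
    rw [this, ncard_setOf_eq_filter]; decide
  · rw [ncard_setOf_eq_filter]; decide
  · have : { x : Fin 7 → Bool | Function.minimalPeriod Gnet x = 2 }
        = { x : Fin 7 → Bool | Gnet^[2] x = x ∧ ¬ Gnet^[1] x = x } := by
      ext x; exact Gnet_mp2 x
    rw [this, ncard_setOf_eq_filter]; decide
  · have : { x : Fin 7 → Bool | Function.minimalPeriod Gnet x = 3 }
        = { x : Fin 7 → Bool | Gnet^[3] x = x ∧ ¬ Gnet^[1] x = x } := by
      ext x; exact Gnet_mp3 x
    rw [this, ncard_setOf_eq_filter]; decide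
  · have : { x : Fin 7 → Bool | Function.minimalPeriod Gnet x = 6 }
        = { x : Fin 7 → Bool | Gnet^[6] x = x ∧ ¬ Gnet^[2] x = x ∧ ¬ Gnet^[3] x = x } := by
      ext x; exact Gnet_mp6 x
    rw [this, ncard_setOf_eq_filter]; decide
end
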